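/- arXiv:cs/0609097 — 5 statements merged into one kernel-verified Lean document; each statement's English description precedes it below -/
import Mathlib

section
/- Let d ≥ 1, r_vel > 0, r_ctr > 0. For any two points a, b ∈ ℝ^d with δ = ‖b − a‖ > 0, define T(δ) = 2·√(δ/r_ctr) if δ ≤ r_vel²/r_ctr, and T(δ) = r_vel/r_ctr + δ/r_vel otherwise. Then there exists a feasible trajectory p for the double integrator with speed bound r_vel and control bound r_ctr such that p(0) = a, p(T(δ)) = b, and p′(0) = 0 = p′(T(δ)) (the vehicle travels from rest at a to rest at b in time T(δ)). -/
/-!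
Accelerate at the maximal rate `rctr`, cruise at the peak speed `V = min rvel √(δ rctr)`,
then brake at rate `rctr`, all along the segment from `a` to `b`. The resulting trapezoidal
speed profile is `rctr`-Lipschitz and bounded by `rvel`; the ramps take time `V / rctr` each,
and `legTime` is exactly the time at which the area under the trapezoid, `V (T - V / rctr)`,
equals `δ = ‖b - a‖`. When `δ ≤ rvel² / rctr` the cruise phase has length zero.
-/

noncomputable section

/-- A feasible trajectory for the double integrator with speed bound `rvel` and
control bound `rctr`: a C¹ map with speed bounded by `rvel` and derivative
Lipschitz with constant `rctr`. -/
def IsFeasibleTraj (d : ℕ) (rvel rctr : ℝ) (p : ℝ → EuclideanSpace ℝ (Fin d)) : Prop :=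
  ContDiff ℝ 1 p ∧ (∀ t : ℝ, ‖deriv p t‖ ≤ rvel) ∧
    LipschitzWith (Real.toNNReal rctr) (deriv p)

/-- The STOP-GO-STOP leg time to traverse a distance `δ`. -/
def legTime (rvel rctr δ : ℝ) : ℝ :=
  if δ ≤ rvel ^ 2 / rctr then 2 * Real.sqrt (δ / rctr) else rvel / rctr + δ / rvel

open intervalIntegral

def trapezoidSpeed (c V T t : ℝ) : ℝ := max 0 (min V (min (c * t) (c * (T - t))))

-- `√(δ rctr)` is the peak speed of the accelerate-then-brake profile covering `δ`.
def cruiseSpeed (rvel rctr δ : ℝ) : ℝ := min rvel √(δ * rctr)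

section Trapezoid

variable {c V T : ℝ}

lemma trapezoidSpeed_nonneg (t : ℝ) : 0 ≤ trapezoidSpeed c V T t := le_max_left _ _

lemma trapezoidSpeed_le (hV : 0 ≤ V) (t : ℝ) : trapezoidSpeed c V T t ≤ V :=
  max_le hV (min_le_left _ _)

lemma trapezoidSpeed_sub_left (t : ℝ) :
    trapezoidSpeed c V T (T - t) = trapezoidSpeed c V T t := by
  rw [trapezoidSpeed, trapezoidSpeed, sub_sub_cancel, min_comm (c * (T - t))]

lemma trapezoidSpeed_zero : trapezoidSpeed c V T 0 = 0 := by
  simp [trapezoidSpeed]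

lemma trapezoidSpeed_self : trapezoidSpeed c V T T = 0 := by
  have h := trapezoidSpeed_sub_left (c := c) (V := V) (T := T) T
  rwa [sub_self, trapezoidSpeed_zero, eq_comm] at h

lemma lipschitzWith_trapezoidSpeed (hc : 0 ≤ c) :
    LipschitzWith (Real.toNNReal c) (trapezoidSpeed c V T) := by
  have hdist : ∀ x y : ℝ, |c * x - c * y| = c * |x - y| := fun x y => by
    rw [← mul_sub, abs_mul, abs_of_nonneg hc]
  have hup : LipschitzWith (Real.toNNReal c) fun t => c * t :=
    LipschitzWith.of_dist_le_mul fun x y => by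
      rw [Real.dist_eq, Real.dist_eq, hdist, Real.coe_toNNReal _ hc]
  have hdown : LipschitzWith (Real.toNNReal c) fun t => c * (T - t) :=
    LipschitzWith.of_dist_le_mul fun x y => by
      rw [Real.dist_eq, Real.dist_eq, hdist, Real.coe_toNNReal _ hc, abs_sub_comm,
        sub_sub_sub_cancel_left]
  have h := ((hup.min hdown).const_min V).const_max 0
  rwa [max_self] at h

lemma trapezoidSpeed_eq_of_le_div (hc : 0 < c) (hT : 2 * (V / c) ≤ T) {t : ℝ} (ht₀ : 0 ≤ t)
    (ht : t ≤ V / c) : trapezoidSpeed c V T t = c * t := by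
  have hup : c * t ≤ V := (le_div_iff₀' hc).1 ht
  have hdown : c * t ≤ c * (T - t) := by gcongr; linarith
  rw [trapezoidSpeed, min_eq_left hdown, min_eq_right hup, max_eq_right (by positivity)]

lemma trapezoidSpeed_eq_of_div_le (hc : 0 < c) (hV : 0 ≤ V) {t : ℝ} (ht₀ : V / c ≤ t)
    (ht : t ≤ T - V / c) : trapezoidSpeed c V T t = V := by
  have hup : V ≤ c * t := (div_le_iff₀' hc).1 ht₀
  have hdown : V ≤ c * (T - t) := (div_le_iff₀' hc).1 (by linarith)
  rw [trapezoidSpeed, min_eq_left (le_min hup hdown), max_eq_right hV]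

theorem integral_trapezoidSpeed (hc : 0 < c) (hV : 0 ≤ V) (hT : 2 * (V / c) ≤ T) :
    ∫ t in 0..T, trapezoidSpeed c V T t = V * (T - V / c) := by
  set τ := V / c
  have hτ : 0 ≤ τ := div_nonneg hV hc.le
  have hcτ : c * τ = V := mul_div_cancel₀ V hc.ne'
  have hint : ∀ x y, IntervalIntegrable (trapezoidSpeed c V T) MeasureTheory.volume x y :=
    (lipschitzWith_trapezoidSpeed hc.le).continuous.intervalIntegrable
  have hramp : ∫ t in 0..τ, trapezoidSpeed c V T t = V * τ / 2 := by
    rw [integral_congr (g := fun t => c * t) fun t ht => by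
      rw [Set.uIcc_of_le hτ] at ht
      exact trapezoidSpeed_eq_of_le_div hc hT ht.1 ht.2]
    rw [integral_const_mul, integral_id, ← hcτ]
    ring
  have hcruise : ∫ t in τ..T - τ, trapezoidSpeed c V T t = V * (T - 2 * τ) := by
    rw [integral_congr (g := fun _ => V) fun t ht => by
      rw [Set.uIcc_of_le (by linarith)] at ht
      exact trapezoidSpeed_eq_of_div_le hc hV ht.1 ht.2]
    rw [integral_const, smul_eq_mul]
    ring
  -- the braking phase is the ramp run backwards
  have hbrake :
      ∫ t in T - τ..T, trapezoidSpeed c V T t = ∫ t in 0..τ, trapezoidSpeed c V T t := by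
    simpa only [trapezoidSpeed_sub_left, sub_zero] using
      (integral_comp_sub_left (trapezoidSpeed c V T) T (a := 0) (b := τ)).symm
  rw [← integral_add_adjacent_intervals (hint 0 τ) (hint τ T),
    ← integral_add_adjacent_intervals (hint τ (T - τ)) (hint (T - τ) T), hbrake, hramp,
    hcruise]
  ring

end Trapezoid

section LegTime

variable {rvel rctr δ : ℝ}

lemma cruiseSpeed_nonneg (hv : 0 ≤ rvel) : 0 ≤ cruiseSpeed rvel rctr δ :=
  le_min hv (Real.sqrt_nonneg _)

lemma cruiseSpeed_le : cruiseSpeed rvel rctr δ ≤ rvel := min_le_left _ _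

lemma cruiseSpeed_of_le (hv : 0 ≤ rvel) (hc : 0 < rctr) (h : δ ≤ rvel ^ 2 / rctr) :
    cruiseSpeed rvel rctr δ = √(δ * rctr) :=
  min_eq_right ((Real.sqrt_le_left hv).2 ((le_div_iff₀ hc).1 h))

lemma cruiseSpeed_of_lt (hc : 0 < rctr) (h : rvel ^ 2 / rctr < δ) :
    cruiseSpeed rvel rctr δ = rvel :=
  min_eq_left (Real.le_sqrt_of_sq_le ((div_le_iff₀ hc).1 h.le))

lemma legTime_of_le (hc : 0 < rctr) (h : δ ≤ rvel ^ 2 / rctr) :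
    legTime rvel rctr δ = 2 * (√(δ * rctr) / rctr) := by
  have hsq : δ / rctr = δ * rctr / rctr ^ 2 := by field_simp
  rw [legTime, if_pos h, hsq, Real.sqrt_div' _ (sq_nonneg _), Real.sqrt_sq hc.le]

lemma legTime_of_lt (h : rvel ^ 2 / rctr < δ) :
    legTime rvel rctr δ = rvel / rctr + δ / rvel := by
  rw [legTime, if_neg h.not_ge]

lemma two_mul_cruiseSpeed_div_le_legTime (hv : 0 < rvel) (hc : 0 < rctr) :
    2 * (cruiseSpeed rvel rctr δ / rctr) ≤ legTime rvel rctr δ := by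
  rcases le_or_gt δ (rvel ^ 2 / rctr) with h | h
  · rw [cruiseSpeed_of_le hv.le hc h, legTime_of_le hc h]
  · have hlong : rvel / rctr ≤ δ / rvel := by
      rw [div_le_div_iff₀ hc hv, ← sq]
      exact ((div_lt_iff₀ hc).1 h).le
    rw [cruiseSpeed_of_lt hc h, legTime_of_lt h]
    linarith

lemma cruiseSpeed_mul_legTime_sub (hv : 0 < rvel) (hc : 0 < rctr) (hδ : 0 ≤ δ) :
    cruiseSpeed rvel rctr δ * (legTime rvel rctr δ - cruiseSpeed rvel rctr δ / rctr) = δ := by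
  rcases le_or_gt δ (rvel ^ 2 / rctr) with h | h
  · have hsq : √(δ * rctr) * √(δ * rctr) = δ * rctr := Real.mul_self_sqrt (by positivity)
    rw [cruiseSpeed_of_le hv.le hc h, legTime_of_le hc h]
    field_simp
    linear_combination hsq
  · rw [cruiseSpeed_of_lt hc h, legTime_of_lt h]
    field_simp
    ring

end LegTime

section Lift

variable {E : Type*} [NormedAddCommGroup E] [NormedSpace ℝ E] {v : ℝ → ℝ}

lemma hasDerivAt_add_integral_smul (hv : Continuous v) (a u : E) (t : ℝ) :
    HasDerivAt (fun s => a + (∫ x in 0..s, v x) • u) (v t • u) t :=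
  ((hv.integral_hasStrictDerivAt 0 t).hasDerivAt.smul_const u).const_add a

lemma deriv_add_integral_smul (hv : Continuous v) (a u : E) :
    deriv (fun s => a + (∫ x in 0..s, v x) • u) = fun t => v t • u :=
  funext fun t => (hasDerivAt_add_integral_smul hv a u t).deriv

lemma isFeasibleTraj_add_integral_smul {d : ℕ} {rvel rctr : ℝ} (hbound : ∀ t, |v t| ≤ rvel)
    (hlip : LipschitzWith (Real.toNNReal rctr) v) (a u : EuclideanSpace ℝ (Fin d))
    (hu : ‖u‖ = 1) : IsFeasibleTraj d rvel rctr fun s => a + (∫ x in 0..s, v x) • u := by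
  have hcont := hlip.continuous
  have hdiff t := (hasDerivAt_add_integral_smul hcont a u t).differentiableAt
  rw [IsFeasibleTraj, contDiff_one_iff_deriv, deriv_add_integral_smul hcont]
  refine ⟨⟨hdiff, hcont.smul continuous_const⟩, fun t => ?_, ?_⟩
  · rw [norm_smul, hu, mul_one, Real.norm_eq_abs]
    exact hbound t
  · refine LipschitzWith.of_dist_le_mul fun x y => ?_
    rw [dist_eq_norm, ← sub_smul, norm_smul, hu, mul_one, ← dist_eq_norm]
    exact hlip.dist_le_mul x y

end Lift

theorem stop_go_stop_leg_general (d : ℕ) (rvel rctr : ℝ)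
    (hv : 0 < rvel) (hc : 0 < rctr)
    (a b : EuclideanSpace ℝ (Fin d)) (hab : 0 < ‖b - a‖) :
    ∃ p : ℝ → EuclideanSpace ℝ (Fin d),
      IsFeasibleTraj d rvel rctr p ∧
      p 0 = a ∧
      p (legTime rvel rctr ‖b - a‖) = b ∧
      deriv p 0 = 0 ∧
      deriv p (legTime rvel rctr ‖b - a‖) = 0 := by
  set δ := ‖b - a‖
  set T := legTime rvel rctr δ
  set V := cruiseSpeed rvel rctr δ
  set u := δ⁻¹ • (b - a)
  have hV : 0 ≤ V := cruiseSpeed_nonneg hv.le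
  have hu : ‖u‖ = 1 := by
    rw [norm_smul, norm_inv, norm_norm, inv_mul_cancel₀ hab.ne']
  have hspeed := lipschitzWith_trapezoidSpeed (V := V) (T := T) hc.le
  have hbound (t : ℝ) : |trapezoidSpeed rctr V T t| ≤ rvel := by
    rw [abs_of_nonneg (trapezoidSpeed_nonneg t)]
    exact (trapezoidSpeed_le hV t).trans cruiseSpeed_le
  refine ⟨_, isFeasibleTraj_add_integral_smul hbound hspeed a u hu, by simp, ?_, ?_, ?_⟩
  · rw [integral_trapezoidSpeed hc hV (two_mul_cruiseSpeed_div_le_legTime hv hc),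
      cruiseSpeed_mul_legTime_sub hv hc hab.le, smul_smul, mul_inv_cancel₀ hab.ne', one_smul,
      add_sub_cancel]
  all_goals rw [deriv_add_integral_smul hspeed.continuous]
  · simp only [trapezoidSpeed_zero, zero_smul]
  · simp only [trapezoidSpeed_self, zero_smul]

theorem stop_go_stop_leg (d : ℕ) (hd : 1 ≤ d) (rvel rctr : ℝ)
    (hv : 0 < rvel) (hc : 0 < rctr)
    (a b : EuclideanSpace ℝ (Fin d)) (hab : 0 < ‖b - a‖) :
    ∃ p : ℝ → EuclideanSpace ℝ (Fin d),
      IsFeasibleTraj d rvel rctr p ∧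
      p 0 = a ∧
      p (legTime rvel rctr ‖b - a‖) = b ∧
      deriv p 0 = 0 ∧
      deriv p (legTime rvel rctr ‖b - a‖) = 0 :=
  stop_go_stop_leg_general d rvel rctr hv hc a b hab
end
end

section
/- Let d ≥ 1, r_vel > 0, r_ctr > 0, and let p be a feasible trajectory for the double integrator with speed bound r_vel and control bound r_ctr. Let v = ‖p′(0)‖ and let T ≥ 0. If ‖p(T) − p(0)‖ ≥ δ for some δ ≥ 0, then T ≥ √((v/r_ctr)² + 2δ/r_ctr) − v/r_ctr. In particular, the minimum time for a double integrator with initial speed v to travel between two points at distance δ is at least √((v/r_ctr)² + 2δ/r_ctr) − v/r_ctr. -/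
/-!
A velocity that is `r_ctr`-Lipschitz gives speed at most `v + r_ctr t` at time `t ≥ 0`, hence
displacement at most `v T + r_ctr T² / 2` after time `T`; solving this quadratic inequality
for `T` gives the bound.
-/

noncomputable section

theorem LipschitzWith.norm_le_norm_add_mul_sub {E : Type*} [SeminormedAddCommGroup E]
    {g : ℝ → E} {K : NNReal} (hg : LipschitzWith K g) {a b : ℝ} (hab : a ≤ b) :
    ‖g b‖ ≤ ‖g a‖ + K * (b - a) := by
  have h := hg.dist_le_mul b a
  rw [dist_eq_norm, Real.dist_eq, abs_of_nonneg (sub_nonneg.2 hab)] at h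
  calc ‖g b‖ ≤ ‖g a‖ + ‖g b - g a‖ := norm_le_insert' _ _
    _ ≤ ‖g a‖ + K * (b - a) := by gcongr

section

variable {E : Type*} [NormedAddCommGroup E] [NormedSpace ℝ E] {f : ℝ → E} {K : NNReal} {a b : ℝ}

theorem norm_sub_le_of_lipschitzWith_deriv (hf : Differentiable ℝ f)
    (hf' : LipschitzWith K (deriv f)) (hab : a ≤ b) :
    ‖f b - f a‖ ≤ ‖deriv f a‖ * (b - a) + K * (b - a) ^ 2 / 2 := by
  have hB : ∀ t, HasDerivAt (fun t => ‖deriv f a‖ * (t - a) + K * (t - a) ^ 2 / 2)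
      (‖deriv f a‖ + K * (t - a)) t := by
    intro t
    have hlin : HasDerivAt (fun t => t - a) 1 t := (hasDerivAt_id' t).sub_const a
    refine ((hlin.const_mul _).add (((hlin.pow 2).const_mul (K : ℝ)).div_const 2)).congr_deriv ?_
    push_cast
    ring
  refine image_norm_le_of_norm_deriv_right_le_deriv_boundary (f := fun t => f t - f a)
    (f' := deriv f) ?_ (fun t _ => ?_) (by simp) hB (fun t ht => ?_) ⟨hab, le_rfl⟩
  · exact (hf.continuous.sub continuous_const).continuousOn
  · exact ((hf t).hasDerivAt.sub_const (f a)).hasDerivWithinAt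
  · exact hf'.norm_le_norm_add_mul_sub ht.1

end

theorem sqrt_sq_add_sub_le_of_le_mul_add_sq {a v δ T : ℝ} (ha : 0 < a) (hv : 0 ≤ v) (hT : 0 ≤ T)
    (h : δ ≤ v * T + a * T ^ 2 / 2) :
    Real.sqrt ((v / a) ^ 2 + 2 * δ / a) - v / a ≤ T := by
  rw [sub_le_iff_le_add]
  refine Real.sqrt_le_iff.2 ⟨by positivity, ?_⟩
  have : (T + v / a) ^ 2 = (v / a) ^ 2 + 2 * (v * T + a * T ^ 2 / 2) / a := by
    field_simp; ring
  rw [this]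
  gcongr

theorem min_time_lower_bound_general (d : ℕ) (rvel rctr : ℝ)
    (hc : 0 < rctr)
    (p : ℝ → EuclideanSpace ℝ (Fin d)) (hp : IsFeasibleTraj d rvel rctr p)
    (T δ : ℝ) (hT : 0 ≤ T) (hdist : δ ≤ ‖p T - p 0‖) :
    Real.sqrt ((‖deriv p 0‖ / rctr) ^ 2 + 2 * δ / rctr) - ‖deriv p 0‖ / rctr ≤ T := by
  obtain ⟨hp_smooth, -, hp_lip⟩ := hp
  have hdisp := norm_sub_le_of_lipschitzWith_deriv (hp_smooth.differentiable one_ne_zero) hp_lip hT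
  rw [Real.coe_toNNReal _ hc.le, sub_zero] at hdisp
  exact sqrt_sq_add_sub_le_of_le_mul_add_sq hc (norm_nonneg _) hT (hdist.trans hdisp)

theorem min_time_lower_bound (d : ℕ) (hd : 1 ≤ d) (rvel rctr : ℝ)
    (hv : 0 < rvel) (hc : 0 < rctr)
    (p : ℝ → EuclideanSpace ℝ (Fin d)) (hp : IsFeasibleTraj d rvel rctr p)
    (T δ : ℝ) (hT : 0 ≤ T) (hδ : 0 ≤ δ) (hdist : δ ≤ ‖p T - p 0‖) :
    Real.sqrt ((‖deriv p 0‖ / rctr) ^ 2 + 2 * δ / rctr) - ‖deriv p 0‖ / rctr ≤ T :=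
  min_time_lower_bound_general d rvel rctr hc p hp T δ hT hdist
end
end

section
/- Let d ≥ 1, r_vel > 0, r_ctr > 0. There exists a constant C > 0 (depending only on d, r_vel, r_ctr) such that for every n ≥ 1 and every set P of n points in the unit cube [0,1]^d ⊂ ℝ^d, there exist a time T ≤ C · n^(1 − 1/(2d)) and a feasible trajectory p for the double integrator with speed bound r_vel and control bound r_ctr such that p(0) = p(T), p′(0) = 0 = p′(T), and every point of P lies on the image p([0,T]). That is, the minimum time to traverse a closed tour of any n points in the unit cube by a double integrator is O(n^(1 − 1/(2d))). -/
/-!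
Cut the cube into `k ^ d` cells of side `1 / k`, where `n ≤ k ^ d ≤ 2 ^ d n`. Visiting the cells
in boustrophedon order, and in each cell its centre and then the points of `P` lying in it, gives
a walk whose consecutive waypoints lie in the same or in adjacent cells, hence at distance at most
`L = 2 √d / k`; going along it and back closes it up, with fewer than `4 k ^ d` hops in all.

A hop of length at most `L` can be made from rest to rest in time `τ = O(L + √L) = O(1 / √k)`:
follow a fixed smooth step profile, slowed down by the factor `τ`, which divides velocities by
`τ` and accelerations by `τ ^ 2`. The whole tour therefore takes time
`O(k ^ d / √k) = O(n ^ (1 - 1 / (2 d)))`.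
-/

noncomputable section

open Set Real
open scoped ContDiff

theorem deriv_eq_zero_of_eqOn_const {F : Type*} [NormedAddCommGroup F] [NormedSpace ℝ F]
    {f : ℝ → F} {s : Set ℝ} {c : F} (hs : UniqueDiffOn ℝ s) (h : EqOn f (fun _ => c) s)
    {x : ℝ} (hx : x ∈ s) : deriv f x = 0 :=
  ((hasDerivWithinAt_const x s c).congr h (h hx)).deriv_eq_zero (hs x hx)

theorem hasCompactSupport_of_forall_notMem_Ioo {β : Type*} [Zero β] {g : ℝ → β}
    (h : ∀ x ∉ Ioo 0 1, g x = 0) :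
    HasCompactSupport g :=
  HasCompactSupport.intro isCompact_Icc fun x hx => h x fun h' => hx (Ioo_subset_Icc_self h')

namespace Real.smoothTransition

theorem deriv_eqOn_Iic : EqOn (deriv smoothTransition) (fun _ => 0) (Iic 0) := fun _ =>
  deriv_eq_zero_of_eqOn_const (uniqueDiffOn_Iic 0) fun _ => zero_of_nonpos

theorem deriv_eqOn_Ici : EqOn (deriv smoothTransition) (fun _ => 0) (Ici 1) := fun _ =>
  deriv_eq_zero_of_eqOn_const (uniqueDiffOn_Ici 1) fun _ => one_of_one_le

theorem deriv_eq_zero {x : ℝ} (hx : x ∉ Ioo 0 1) : deriv smoothTransition x = 0 := by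
  rcases le_or_gt x 0 with h | h
  · exact deriv_eqOn_Iic (mem_Iic.2 h)
  · exact deriv_eqOn_Ici (mem_Ici.2 (not_lt.1 fun h' => hx ⟨h, h'⟩))

theorem deriv_deriv_eq_zero {x : ℝ} (hx : x ∉ Ioo 0 1) :
    deriv (deriv smoothTransition) x = 0 := by
  rcases le_or_gt x 0 with h | h
  · exact deriv_eq_zero_of_eqOn_const (uniqueDiffOn_Iic 0) deriv_eqOn_Iic (mem_Iic.2 h)
  · exact deriv_eq_zero_of_eqOn_const (uniqueDiffOn_Ici 1) deriv_eqOn_Ici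
      (mem_Ici.2 (not_lt.1 fun h' => hx ⟨h, h'⟩))

theorem contDiff_deriv : ContDiff ℝ ∞ (deriv smoothTransition) :=
  smoothTransition.contDiff.iterate_deriv 1

theorem exists_bound_deriv : ∃ M > 0, ∀ x,
    |deriv smoothTransition x| ≤ M ∧ |deriv (deriv smoothTransition) x| ≤ M := by
  obtain ⟨M₁, hM₁⟩ := contDiff_deriv.continuous.bounded_above_of_compact_support
    (hasCompactSupport_of_forall_notMem_Ioo fun _ => deriv_eq_zero)
  obtain ⟨M₂, hM₂⟩ := (smoothTransition.contDiff.iterate_deriv 2).continuous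
    |>.bounded_above_of_compact_support
      (hasCompactSupport_of_forall_notMem_Ioo fun _ => deriv_deriv_eq_zero)
  exact ⟨max (max M₁ M₂) 1, by positivity, fun x =>
    ⟨(hM₁ x).trans (by simp), (hM₂ x).trans (by simp)⟩⟩

end Real.smoothTransition

theorem Nat.eq_of_sub_mem_Ioo {s : ℝ} {i j : ℕ} (hi : s - i ∈ Ioo 0 1) (hj : s - j ∈ Ioo 0 1) :
    i = j := by
  have h₁ : (i : ℝ) < j + 1 := by linarith [hi.1, hj.2]
  have h₂ : (j : ℝ) < i + 1 := by linarith [hi.2, hj.1]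
  norm_cast at h₁ h₂
  omega

section StepPath

variable {E : Type*} [NormedAddCommGroup E] [NormedSpace ℝ E]

theorem norm_sum_comp_sub_smul_le {g : ℝ → ℝ} {M L : ℝ} (hg : ∀ x ∉ Ioo 0 1, g x = 0)
    (hM : ∀ x, |g x| ≤ M) (hL : 0 ≤ L) {v : ℕ → E} {m : ℕ} (hv : ∀ i < m, ‖v i‖ ≤ L)
    (s : ℝ) : ‖∑ i ∈ Finset.range m, g (s - i) • v i‖ ≤ M * L := by
  by_cases h : ∃ i < m, s - i ∈ Ioo 0 1
  · obtain ⟨i, him, hi⟩ := h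
    rw [Finset.sum_eq_single_of_mem i (Finset.mem_range.2 him) fun j _ hji => by
      rw [hg _ fun hj => hji (Nat.eq_of_sub_mem_Ioo hj hi), zero_smul], norm_smul]
    exact mul_le_mul (hM _) (hv i him) (norm_nonneg _) ((abs_nonneg _).trans (hM 0))
  · push Not at h
    rw [Finset.sum_eq_zero fun i hi => by
      rw [hg _ (h i (Finset.mem_range.1 hi)), zero_smul], norm_zero]
    exact mul_nonneg ((abs_nonneg _).trans (hM 0)) hL

theorem hasDerivAt_sum_comp_sub_smul {g : ℝ → ℝ} (hg : Differentiable ℝ g) (v : ℕ → E)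
    (m : ℕ) (s : ℝ) :
    HasDerivAt (fun s => ∑ i ∈ Finset.range m, g (s - i) • v i)
      (∑ i ∈ Finset.range m, deriv g (s - i) • v i) s :=
  HasDerivAt.fun_sum fun i _ => ((hg _).hasDerivAt.comp_sub_const s i).smul_const (v i)

/-- Rest-to-rest interpolation: on `[i, i + 1]` the path runs along the segment from `w i` to
`w (i + 1)` with the profile `smoothTransition`. -/
def stepPath (w : ℕ → E) (m : ℕ) (s : ℝ) : E :=
  w 0 + ∑ i ∈ Finset.range m, smoothTransition (s - i) • (w (i + 1) - w i)

variable (w : ℕ → E) (m : ℕ)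

theorem stepPath_natCast {j : ℕ} (hj : j ≤ m) : stepPath w m j = w j := by
  have h_done : ∀ i ∈ Finset.range j,
      smoothTransition ((j : ℝ) - i) • (w (i + 1) - w i) = w (i + 1) - w i := fun i hi => by
    rw [smoothTransition.one_of_one_le (by
      rw [le_sub_iff_add_le']; exact_mod_cast Finset.mem_range.1 hi), one_smul]
  have h_todo : ∀ i ∈ Finset.Ico j m,
      smoothTransition ((j : ℝ) - i) • (w (i + 1) - w i) = 0 := fun i hi => by
    rw [smoothTransition.zero_of_nonpos (by
      rw [sub_nonpos]; exact_mod_cast (Finset.mem_Ico.1 hi).1), zero_smul]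
  rw [stepPath, ← Finset.sum_range_add_sum_Ico _ hj, Finset.sum_congr rfl h_done,
    Finset.sum_congr rfl h_todo, Finset.sum_const_zero, add_zero, Finset.sum_range_sub,
    add_sub_cancel]

theorem deriv_stepPath :
    deriv (stepPath w m) =
      fun s => ∑ i ∈ Finset.range m, deriv smoothTransition (s - i) • (w (i + 1) - w i) :=
  funext fun s => ((hasDerivAt_sum_comp_sub_smul
    (smoothTransition.contDiff (n := 1)).differentiable_one _ m s).const_add (w 0)).deriv

theorem contDiff_stepPath : ContDiff ℝ 1 (stepPath w m) := by
  have := smoothTransition.contDiff (n := 1)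
  unfold stepPath
  fun_prop

theorem deriv_stepPath_natCast (j : ℕ) : deriv (stepPath w m) j = 0 := by
  rw [deriv_stepPath]
  refine Finset.sum_eq_zero fun i _ => ?_
  rw [smoothTransition.deriv_eq_zero, zero_smul]
  rintro ⟨h₁, h₂⟩
  rw [sub_pos] at h₁
  rw [sub_lt_iff_lt_add'] at h₂
  norm_cast at h₁ h₂
  omega

variable {w m} {M L : ℝ}

theorem norm_deriv_stepPath_le (hL : 0 ≤ L) (hw : ∀ i < m, dist (w i) (w (i + 1)) ≤ L)
    (hM : ∀ x, |deriv smoothTransition x| ≤ M) (s : ℝ) :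
    ‖deriv (stepPath w m) s‖ ≤ M * L := by
  rw [deriv_stepPath]
  exact norm_sum_comp_sub_smul_le (fun _ => smoothTransition.deriv_eq_zero) hM hL
    (fun i hi => dist_eq_norm' (w i) _ ▸ hw i hi) s

theorem lipschitzWith_deriv_stepPath (hL : 0 ≤ L) (hw : ∀ i < m, dist (w i) (w (i + 1)) ≤ L)
    (hM : ∀ x, |deriv (deriv smoothTransition) x| ≤ M) :
    LipschitzWith (M * L).toNNReal (deriv (stepPath w m)) := by
  have hderiv (s : ℝ) : HasDerivAt (deriv (stepPath w m))
      (∑ i ∈ Finset.range m, deriv (deriv smoothTransition) (s - i) • (w (i + 1) - w i)) s := by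
    rw [deriv_stepPath]
    exact hasDerivAt_sum_comp_sub_smul
      (smoothTransition.contDiff_deriv.differentiable (by simp)) _ m s
  refine lipschitzWith_of_nnnorm_deriv_le (fun s => (hderiv s).differentiableAt) fun s => ?_
  rw [(hderiv s).deriv, ← norm_toNNReal]
  exact Real.toNNReal_le_toNNReal
    (norm_sum_comp_sub_smul_le (fun _ => smoothTransition.deriv_deriv_eq_zero) hM hL
      (fun i hi => dist_eq_norm' (w i) _ ▸ hw i hi) s)

end StepPath

theorem isFeasibleTraj_comp_mul_left {d : ℕ} {rvel rctr V : ℝ} {K : NNReal}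
    {q : ℝ → EuclideanSpace ℝ (Fin d)} (hq : ContDiff ℝ 1 q) (hV : ∀ s, ‖deriv q s‖ ≤ V)
    (hK : LipschitzWith K (deriv q)) {c : ℝ} (hc : 0 ≤ c) (hcV : c * V ≤ rvel)
    (hcK : c ^ 2 * K ≤ rctr) : IsFeasibleTraj d rvel rctr (fun t => q (c * t)) := by
  have hderiv : deriv (fun t => q (c * t)) = fun t => c • deriv q (c * t) :=
    funext (deriv_comp_mul_left c q)
  refine ⟨hq.comp (contDiff_const.mul contDiff_id), fun t => ?_, ?_⟩
  · rw [hderiv, norm_smul, Real.norm_of_nonneg hc]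
    exact (mul_le_mul_of_nonneg_left (hV _) hc).trans hcV
  · rw [hderiv]
    refine LipschitzWith.of_dist_le_mul fun s t => ?_
    rw [dist_smul₀, Real.norm_of_nonneg hc, Real.dist_eq,
      Real.coe_toNNReal _ ((mul_nonneg (sq_nonneg c) K.2).trans hcK)]
    calc c * dist (deriv q (c * s)) (deriv q (c * t))
        ≤ c * (K * |c * s - c * t|) := by
          gcongr; rw [← Real.dist_eq]; exact hK.dist_le_mul _ _
      _ = c ^ 2 * K * |s - t| := by
          rw [← mul_sub, abs_mul, abs_of_nonneg hc]; ring
      _ ≤ rctr * |s - t| := by gcongr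

theorem exists_feasibleTraj_of_hops {d : ℕ} {rvel rctr : ℝ} (hv : 0 < rvel) (hc : 0 < rctr) :
    ∃ A > 0, ∀ L > 0, ∀ (m : ℕ) (w : ℕ → EuclideanSpace ℝ (Fin d)),
      (∀ i < m, dist (w i) (w (i + 1)) ≤ L) →
      ∃ (τ : ℝ) (p : ℝ → EuclideanSpace ℝ (Fin d)), 0 < τ ∧ τ ≤ A * (L + √L) ∧
        IsFeasibleTraj d rvel rctr p ∧ (∀ j ≤ m, p (j * τ) = w j) ∧
        ∀ j : ℕ, deriv p (j * τ) = 0 := by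
  obtain ⟨M, hM, hMbound⟩ := smoothTransition.exists_bound_deriv
  refine ⟨M / rvel + √(M / rctr), by positivity, fun L hL m w hw => ?_⟩
  set τ := (M / rvel + √(M / rctr)) * (L + √L)
  have hτ : 0 < τ := by positivity
  have hjτ (j : ℕ) : τ⁻¹ * (j * τ) = j := by field_simp
  refine ⟨τ, fun t => stepPath w m (τ⁻¹ * t), hτ, le_rfl, ?_, fun j hj => ?_, fun j => ?_⟩
  · refine isFeasibleTraj_comp_mul_left (contDiff_stepPath w m)
      (norm_deriv_stepPath_le hL.le hw fun x => (hMbound x).1)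
      (lipschitzWith_deriv_stepPath hL.le hw fun x => (hMbound x).2) (inv_nonneg.2 hτ.le) ?_ ?_
    · have hτL : M / rvel * L ≤ τ :=
        calc M / rvel * L ≤ M / rvel * (L + √L) := by
              gcongr; exact le_add_of_nonneg_right (by positivity)
          _ ≤ τ := mul_le_mul_of_nonneg_right (le_add_of_nonneg_right (by positivity))
              (by positivity)
      rw [inv_mul_le_iff₀ hτ]
      calc M * L = M / rvel * L * rvel := by field_simp
        _ ≤ τ * rvel := mul_le_mul_of_nonneg_right hτL hv.le
    · have hτL : √(M / rctr) * √L ≤ τ :=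
        calc √(M / rctr) * √L ≤ √(M / rctr) * (L + √L) := by
              gcongr; exact le_add_of_nonneg_left hL.le
          _ ≤ τ := mul_le_mul_of_nonneg_right (le_add_of_nonneg_left (by positivity))
              (by positivity)
      have hτL2 : M / rctr * L ≤ τ ^ 2 :=
        calc M / rctr * L = (√(M / rctr) * √L) ^ 2 := by
              rw [mul_pow, Real.sq_sqrt (by positivity), Real.sq_sqrt hL.le]
          _ ≤ τ ^ 2 := by gcongr
      rw [Real.coe_toNNReal _ (by positivity), inv_pow, inv_mul_le_iff₀ (by positivity)]
      calc M * L = M / rctr * L * rctr := by field_simp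
        _ ≤ τ ^ 2 * rctr := mul_le_mul_of_nonneg_right hτL2 hc.le
  · simp only [hjτ, stepPath_natCast w m hj]
  · rw [deriv_comp_mul_left, hjτ, deriv_stepPath_natCast, smul_zero]

def zigzag (k q : ℕ) : ℕ :=
  if q / k % 2 = 0 then q % k else k - 1 - q % k

theorem zigzag_add_mul {k r : ℕ} (hr : r < k) (s : ℕ) :
    zigzag k (r + k * s) = if s % 2 = 0 then r else k - 1 - r := by
  have hk : 0 < k := by omega
  rw [zigzag, Nat.add_mul_div_left _ _ hk, Nat.div_eq_of_lt hr, zero_add,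
    Nat.add_mul_mod_self_left, Nat.mod_eq_of_lt hr]

theorem zigzag_lt {k : ℕ} (hk : 0 < k) (q : ℕ) : zigzag k q < k := by
  have := Nat.mod_lt q hk
  unfold zigzag; split_ifs <;> omega

theorem zigzag_succ {k : ℕ} (hk : 0 < k) (q : ℕ) :
    zigzag k (q + 1) ≤ zigzag k q + 1 ∧ zigzag k q ≤ zigzag k (q + 1) + 1 := by
  obtain ⟨r, s, hr, rfl⟩ : ∃ r s, r < k ∧ q = r + k * s :=
    ⟨q % k, q / k, Nat.mod_lt q hk, (Nat.mod_add_div q k).symm⟩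
  rcases Nat.lt_or_ge (r + 1) k with hr' | hr'
  · rw [show r + k * s + 1 = (r + 1) + k * s by ring, zigzag_add_mul hr', zigzag_add_mul hr]
    split_ifs <;> omega
  · rw [show r + k * s + 1 = 0 + k * (s + 1) by rw [mul_add]; omega, zigzag_add_mul hk,
      zigzag_add_mul hr]
    split_ifs <;> omega

theorem eq_of_zigzag_eq {k q q' : ℕ} (hk : 0 < k) (hdiv : q / k = q' / k)
    (h : zigzag k q = zigzag k q') : q = q' := by
  have := Nat.mod_lt q hk
  have := Nat.mod_lt q' hk
  have hmod : q % k = q' % k := by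
    unfold zigzag at h; rw [hdiv] at h; split_ifs at h <;> omega
  rw [← Nat.mod_add_div q k, ← Nat.mod_add_div q' k, hmod, hdiv]

/-- The `j`-th cell of the `k × ⋯ × k` grid in boustrophedon order. -/
def snake (k d j : ℕ) : Fin d → ℕ := fun i => zigzag k (j / k ^ (i : ℕ))

theorem snake_lt {k : ℕ} (hk : 0 < k) (d j : ℕ) (i : Fin d) : snake k d j i < k :=
  zigzag_lt hk _

theorem snake_succ {k : ℕ} (hk : 0 < k) (d j : ℕ) (i : Fin d) :
    snake k d (j + 1) i ≤ snake k d j i + 1 ∧ snake k d j i ≤ snake k d (j + 1) i + 1 := by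
  unfold snake
  rw [Nat.succ_div]
  split_ifs
  · exact zigzag_succ hk _
  · simp

theorem snake_injOn {k : ℕ} (hk : 0 < k) (d : ℕ) :
    Set.InjOn (snake k d) (Set.Iio (k ^ d)) := by
  intro j hj j' hj' h
  suffices ∀ t ≤ d, j / k ^ (d - t) = j' / k ^ (d - t) by simpa using this d le_rfl
  intro t ht
  induction t with
  | zero => rw [Nat.sub_zero, Nat.div_eq_of_lt hj, Nat.div_eq_of_lt hj']
  | succ t ih =>
    have hsucc : d - t = d - (t + 1) + 1 := by omega
    have hdiv := ih (by omega)
    rw [hsucc, pow_succ, ← Nat.div_div_eq_div_mul, ← Nat.div_div_eq_div_mul] at hdiv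
    exact eq_of_zigzag_eq hk hdiv (congrFun h ⟨d - (t + 1), by omega⟩)

theorem snake_surjOn {k : ℕ} (hk : 0 < k) (d : ℕ) {c : Fin d → ℕ} (hc : ∀ i, c i < k) :
    ∃ j < k ^ d, snake k d j = c := by
  classical
  have hsurj := Finset.surjOn_of_injOn_of_card_le (snake k d)
    (s := Finset.range (k ^ d)) (t := Fintype.piFinset fun _ => Finset.range k)
    (fun j _ => by simpa using snake_lt hk d j)
    (by simpa using snake_injOn hk d) (by simp)
  obtain ⟨j, hj, hjc⟩ := hsurj (by simpa using hc)
  exact ⟨j, by simpa using hj, hjc⟩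

theorem List.isChain_flatMap_range {α : Type*} {R : α → α → Prop} {f : ℕ → List α}
    {S : ℕ → Set α} (hne : ∀ j, f j ≠ []) (hf : ∀ j, ∀ x ∈ f j, x ∈ S j)
    (hR : ∀ j, ∀ x ∈ S j, ∀ y, y ∈ S j ∨ y ∈ S (j + 1) → R x y) (n : ℕ) :
    ((List.range n).flatMap f).IsChain R := by
  rw [List.flatMap_def, List.isChain_flatten (by simpa using fun j _ => hne j),
    List.isChain_map, List.isChain_range]
  refine ⟨fun l hl => ?_, fun j _ x hx y hy => ?_⟩
  · obtain ⟨j, -, rfl⟩ := List.mem_map.1 hl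
    exact List.Pairwise.isChain (List.pairwise_of_forall_mem_list fun x hx y hy =>
      hR j x (hf j x hx) y (Or.inl (hf j y hy)))
  · exact hR j x (hf j x (List.mem_of_mem_getLast? hx)) y
      (Or.inr (hf (j + 1) y (List.mem_of_mem_head? hy)))

theorem List.IsChain.exists_closed_walk {α : Type*} {R : α → α → Prop} (hrefl : ∀ a, R a a)
    (hsymm : ∀ a b, R a b → R b a) {l : List α} (hl : l ≠ []) (h : l.IsChain R) :
    ∃ w : ℕ → α, (∀ i < 2 * l.length - 1, R (w i) (w (i + 1))) ∧
      w (2 * l.length - 1) = w 0 ∧ ∀ x ∈ l, ∃ i < l.length, w i = x := by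
  -- walk along `l ++ l.reverse`
  have hchain : (l ++ l.reverse).IsChain R := by
    refine List.isChain_append.2 ⟨h, List.isChain_reverse.2 (h.imp fun x y => hsymm x y),
      fun x hx y hy => ?_⟩
    rw [← List.getLast?_eq_head?_reverse] at hy
    rw [Option.mem_unique hx hy]
    exact hrefl y
  have hlen : (l ++ l.reverse).length = 2 * l.length := by simp [two_mul]
  have hl0 : 0 < l.length := List.length_pos_iff.2 hl
  refine ⟨fun i => (l ++ l.reverse).getD i (l.head hl), fun i hi => ?_, ?_, fun x hx => ?_⟩
  · dsimp only
    rw [List.getD_eq_getElem _ _ (by omega), List.getD_eq_getElem _ _ (by omega)]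
    exact List.isChain_iff_getElem.1 hchain i (by omega)
  · dsimp only
    rw [List.getD_eq_getElem _ _ (by omega), List.getD_eq_getElem _ _ (by omega),
      List.getElem_append_right (by omega), List.getElem_reverse, List.getElem_append_left hl0]
    congr 1
    omega
  · obtain ⟨i, hi, rfl⟩ := List.getElem_of_mem hx
    exact ⟨i, hi, by dsimp only; rw [List.getD_eq_getElem _ _ (by omega),
      List.getElem_append_left hi]⟩

section Grid

variable {d k : ℕ}

/-- The grid cell of side `1 / k` that contains `x`; points with a coordinate `1` are put in the
last cell. -/
def cellOf (k : ℕ) (x : EuclideanSpace ℝ (Fin d)) : Fin d → ℕ :=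
  fun i => min ⌊x i * k⌋₊ (k - 1)

def cell (k : ℕ) (c : Fin d → ℕ) : Set (EuclideanSpace ℝ (Fin d)) :=
  {x | ∀ i, (c i : ℝ) ≤ x i * k ∧ x i * k ≤ c i + 1}

def cellCenter (k : ℕ) (c : Fin d → ℕ) : EuclideanSpace ℝ (Fin d) :=
  WithLp.toLp 2 fun i => (c i + 1 / 2) / k

theorem cellCenter_mem_cell (hk : 0 < k) (c : Fin d → ℕ) : cellCenter k c ∈ cell k c := by
  intro i
  have hk' : (k : ℝ) ≠ 0 := by positivity
  simp only [cellCenter, PiLp.toLp_apply, div_mul_cancel₀ _ hk']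
  constructor <;> linarith

theorem cellOf_lt (hk : 0 < k) (x : EuclideanSpace ℝ (Fin d)) (i : Fin d) : cellOf k x i < k :=
  lt_of_le_of_lt (min_le_right _ _) (by omega)

theorem mem_cell_cellOf (hk : 0 < k) {x : EuclideanSpace ℝ (Fin d)}
    (hx : ∀ i, x i ∈ Icc (0 : ℝ) 1) : x ∈ cell k (cellOf k x) := by
  intro i
  have hxk : 0 ≤ x i * k := mul_nonneg (hx i).1 k.cast_nonneg
  refine ⟨(Nat.cast_le.2 (min_le_left _ _)).trans (Nat.floor_le hxk), ?_⟩
  rcases min_cases ⌊x i * k⌋₊ (k - 1) with ⟨h, -⟩ | ⟨h, -⟩ <;> rw [cellOf, h]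
  · exact (Nat.lt_floor_add_one _).le
  · rw [Nat.cast_sub (by omega), Nat.cast_one, sub_add_cancel]
    exact mul_le_of_le_one_left k.cast_nonneg (hx i).2

theorem dist_le_of_mem_cell (hk : 0 < k) {c c' : Fin d → ℕ}
    (hadj : ∀ i, c i ≤ c' i + 1 ∧ c' i ≤ c i + 1) {x y : EuclideanSpace ℝ (Fin d)}
    (hx : x ∈ cell k c) (hy : y ∈ cell k c') : dist x y ≤ 2 * √d / k := by
  have hk' : (0 : ℝ) < k := by exact_mod_cast hk
  have hcoord (i : Fin d) : dist (x i) (y i) ^ 2 ≤ (2 / k) ^ 2 := by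
    have h₁ : (c i : ℝ) ≤ c' i + 1 := by exact_mod_cast (hadj i).1
    have h₂ : (c' i : ℝ) ≤ c i + 1 := by exact_mod_cast (hadj i).2
    have hxy : |x i * k - y i * k| ≤ 2 := by
      rw [abs_sub_le_iff]; constructor <;> linarith [hx i, hy i]
    rw [Real.dist_eq]
    refine pow_le_pow_left₀ (abs_nonneg _) ((le_div_iff₀ hk').2 ?_) 2
    rwa [← abs_of_pos hk', ← abs_mul, sub_mul]
  calc dist x y = √(∑ i, dist (x i) (y i) ^ 2) := EuclideanSpace.dist_eq x y
    _ ≤ √(∑ _i : Fin d, (2 / k : ℝ) ^ 2) :=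
        Real.sqrt_le_sqrt (Finset.sum_le_sum fun i _ => hcoord i)
    _ = 2 * √d / k := by
      rw [Finset.sum_const, Finset.card_univ, Fintype.card_fin, nsmul_eq_mul,
        Real.sqrt_mul d.cast_nonneg, Real.sqrt_sq (by positivity)]
      ring

def gridTour (k : ℕ) (P : Finset (EuclideanSpace ℝ (Fin d))) :
    List (EuclideanSpace ℝ (Fin d)) :=
  (List.range (k ^ d)).flatMap fun j =>
    cellCenter k (snake k d j) :: (P.filter fun x => cellOf k x = snake k d j).toList

variable (P : Finset (EuclideanSpace ℝ (Fin d)))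

theorem gridTour_ne_nil (hk : 0 < k) : gridTour k P ≠ [] := by
  simpa [gridTour, List.flatMap_eq_nil_iff] using ⟨0, pow_pos hk d⟩

theorem length_gridTour_le (hk : 0 < k) : (gridTour k P).length ≤ k ^ d + P.card := by
  classical
  have hcount : ∑ j ∈ Finset.range (k ^ d), (P.filter fun x => cellOf k x = snake k d j).card
      ≤ P.card := by
    rw [← Finset.sum_image (f := fun c => (P.filter fun x => cellOf k x = c).card)
      (fun j hj j' hj' h => snake_injOn hk d (by simpa using hj) (by simpa using hj') h),
      Finset.sum_card_fiberwise_eq_card_filter]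
    exact Finset.card_filter_le _ _
  have hsum (f : ℕ → ℕ) :
      ((List.range (k ^ d)).map f).sum = ∑ j ∈ Finset.range (k ^ d), f j := by
    simp [Finset.sum_eq_multiset_sum, Finset.range_val, Multiset.range]
  simp only [gridTour, List.length_flatMap, List.length_cons, Finset.length_toList]
  rw [hsum, Finset.sum_add_distrib, Finset.sum_const, Finset.card_range, smul_eq_mul, mul_one,
    add_comm]
  exact Nat.add_le_add_left hcount _

theorem mem_gridTour (hk : 0 < k) {x : EuclideanSpace ℝ (Fin d)} (hxP : x ∈ P) :
    x ∈ gridTour k P := by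
  obtain ⟨j, hj, hjx⟩ := snake_surjOn hk d (cellOf_lt hk x)
  exact List.mem_flatMap.2 ⟨j, List.mem_range.2 hj,
    List.mem_cons_of_mem _ (by simpa using ⟨hxP, hjx.symm⟩)⟩

theorem isChain_gridTour (hk : 0 < k) (hP : ∀ x ∈ P, ∀ i, x i ∈ Icc (0 : ℝ) 1) :
    (gridTour k P).IsChain fun x y => dist x y ≤ 2 * √d / k := by
  refine List.isChain_flatMap_range (S := fun j => cell k (snake k d j)) (by simp)
    (fun j x hx => ?_) (fun j x hx y hy => ?_) _
  · rcases List.mem_cons.1 hx with rfl | hx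
    · exact cellCenter_mem_cell hk _
    · obtain ⟨hxP, hxj⟩ := by simpa using hx
      exact hxj ▸ mem_cell_cellOf hk (hP x hxP)
  · rcases hy with hy | hy
    · exact dist_le_of_mem_cell hk (fun i => by omega) hx hy
    · exact dist_le_of_mem_cell hk (fun i => (snake_succ hk d j i).symm) hx hy

theorem exists_closed_walk_through_cube (hk : 0 < k) (hP : ∀ x ∈ P, ∀ i, x i ∈ Icc (0 : ℝ) 1) :
    ∃ (m : ℕ) (w : ℕ → EuclideanSpace ℝ (Fin d)), m < 2 * (k ^ d + P.card) ∧
      (∀ i < m, dist (w i) (w (i + 1)) ≤ 2 * √d / k) ∧ w m = w 0 ∧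
      ∀ x ∈ P, ∃ i ≤ m, w i = x := by
  have hne := gridTour_ne_nil P hk
  obtain ⟨w, hstep, hclosed, hvisit⟩ := (isChain_gridTour P hk hP).exists_closed_walk
    (fun x => by rw [dist_self]; positivity) (fun x y h => by rwa [dist_comm]) hne
  have hlen := length_gridTour_le P hk
  have hpos := List.length_pos_iff.2 hne
  refine ⟨_, w, by omega, hstep, hclosed, fun x hx => ?_⟩
  obtain ⟨i, hi, rfl⟩ := hvisit x (mem_gridTour P hk hx)
  exact ⟨i, by omega, rfl⟩

end Grid

theorem Nat.exists_le_pow_le_two_pow_mul {n d : ℕ} (hn : 1 ≤ n) (hd : 1 ≤ d) :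
    ∃ k, 0 < k ∧ n ≤ k ^ d ∧ k ^ d ≤ 2 ^ d * n := by
  classical
  have h : ∃ k, n ≤ k ^ d := ⟨n, Nat.le_self_pow (by omega) n⟩
  set k := Nat.find h
  have hspec : n ≤ k ^ d := Nat.find_spec h
  have hk : 0 < k := Nat.pos_of_ne_zero fun h0 => by
    rw [h0, zero_pow (by omega)] at hspec
    omega
  refine ⟨k, hk, hspec, ?_⟩
  rcases Nat.lt_or_ge k 2 with hk2 | hk2
  · rw [show k = 1 by omega, one_pow]
    exact Nat.one_le_iff_ne_zero.2 (by positivity)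
  · have hprev : (k - 1) ^ d < n := not_le.1 (Nat.find_min h (by omega : k - 1 < k))
    calc k ^ d ≤ (2 * (k - 1)) ^ d := Nat.pow_le_pow_left (by omega) d
      _ = 2 ^ d * (k - 1) ^ d := mul_pow _ _ _
      _ ≤ 2 ^ d * n := Nat.mul_le_mul_left _ hprev.le

theorem pow_div_sqrt_le_two_pow_mul_rpow {n k d : ℕ} (hd : 1 ≤ d) (hk : 0 < k)
    (hkn : k ^ d ≤ 2 ^ d * n) :
    (k : ℝ) ^ d / √k ≤ 2 ^ d * (n : ℝ) ^ (1 - 1 / (2 * (d : ℝ))) := by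
  have hk' : (0 : ℝ) < k := by exact_mod_cast hk
  have he : 0 ≤ 1 - 1 / (2 * (d : ℝ)) := by
    have : (1 : ℝ) ≤ d := by exact_mod_cast hd
    rw [sub_nonneg, div_le_one (by positivity)]
    linarith
  -- `√k = (k ^ d) ^ (1 / (2 d))`
  have hpow : (k : ℝ) ^ d / √k = ((k : ℝ) ^ d) ^ (1 - 1 / (2 * (d : ℝ))) := by
    rw [← Real.rpow_natCast, ← Real.rpow_mul hk'.le, Real.sqrt_eq_rpow, ← Real.rpow_sub hk']
    congr 1
    field_simp
  calc (k : ℝ) ^ d / √k = ((k : ℝ) ^ d) ^ (1 - 1 / (2 * (d : ℝ))) := hpow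
    _ ≤ ((2 : ℝ) ^ d * n) ^ (1 - 1 / (2 * (d : ℝ))) :=
        Real.rpow_le_rpow (by positivity) (by exact_mod_cast hkn) he
    _ = ((2 : ℝ) ^ d) ^ (1 - 1 / (2 * (d : ℝ))) * (n : ℝ) ^ (1 - 1 / (2 * (d : ℝ))) :=
        Real.mul_rpow (by positivity) n.cast_nonneg
    _ ≤ 2 ^ d * (n : ℝ) ^ (1 - 1 / (2 * (d : ℝ))) := by
        gcongr
        exact Real.rpow_le_self_of_one_le (one_le_pow₀ one_le_two) (sub_le_self _ (by positivity))

theorem div_add_sqrt_div_le {b k : ℝ} (hb : 0 ≤ b) (hk : 1 ≤ k) :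
    b / k + √(b / k) ≤ (b + √b) / √k := by
  have hsk : 0 < √k := Real.sqrt_pos.2 (by linarith)
  have hsk_le : √k ≤ k := (Real.sqrt_le_left (by linarith)).2 (by nlinarith)
  rw [Real.sqrt_div hb, add_div]
  gcongr

theorem worst_case_DITSP_upper_bound (d : ℕ) (hd : 1 ≤ d) (rvel rctr : ℝ)
    (hv : 0 < rvel) (hc : 0 < rctr) :
    ∃ C : ℝ, 0 < C ∧ ∀ n : ℕ, 1 ≤ n →
      ∀ P : Finset (EuclideanSpace ℝ (Fin d)),
        P.card = n →
        (∀ x ∈ P, ∀ i, x i ∈ Set.Icc (0 : ℝ) 1) →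
        ∃ (T : ℝ) (p : ℝ → EuclideanSpace ℝ (Fin d)),
          0 ≤ T ∧
          T ≤ C * (n : ℝ) ^ ((1 : ℝ) - 1 / (2 * (d : ℝ))) ∧
          IsFeasibleTraj d rvel rctr p ∧
          p 0 = p T ∧ deriv p 0 = 0 ∧ deriv p T = 0 ∧
          ∀ x ∈ P, ∃ τ ∈ Set.Icc (0 : ℝ) T, p τ = x := by
  obtain ⟨A, hA, hhops⟩ := exists_feasibleTraj_of_hops (d := d) hv hc
  set b : ℝ := 2 * √d
  refine ⟨4 * A * (b + √b) * 2 ^ d, by positivity, fun n hn P hcard hP => ?_⟩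
  obtain ⟨k, hk, hnk, hkn⟩ := Nat.exists_le_pow_le_two_pow_mul hn hd
  obtain ⟨m, w, hm, hstep, hclosed, hvisit⟩ := exists_closed_walk_through_cube P hk hP
  obtain ⟨τ, p, hτ, hτA, hp, hpw, hpd⟩ := hhops (b / k) (by positivity) m w hstep
  have hm4 : (m : ℝ) ≤ 4 * k ^ d := by
    rw [hcard] at hm
    exact_mod_cast (show m ≤ 4 * k ^ d by omega)
  have hτk : τ ≤ A * ((b + √b) / √k) :=
    hτA.trans (mul_le_mul_of_nonneg_left
      (div_add_sqrt_div_le (by positivity) (by exact_mod_cast hk)) hA.le)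
  refine ⟨m * τ, p, by positivity, ?_, hp, ?_, by simpa using hpd 0, hpd m, fun x hx => ?_⟩
  · calc (m : ℝ) * τ ≤ 4 * k ^ d * (A * ((b + √b) / √k)) := by gcongr
      _ = 4 * A * (b + √b) * ((k : ℝ) ^ d / √k) := by ring
      _ ≤ 4 * A * (b + √b) * (2 ^ d * (n : ℝ) ^ (1 - 1 / (2 * (d : ℝ)))) := by
          gcongr; exact pow_div_sqrt_le_two_pow_mul_rpow hd hk hkn
      _ = _ := by ring
  · calc p 0 = w 0 := by simpa using hpw 0 (Nat.zero_le m)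
      _ = p (m * τ) := by rw [hpw m le_rfl, hclosed]
  · obtain ⟨i, hi, rfl⟩ := hvisit x hx
    exact ⟨i * τ, ⟨by positivity, by gcongr⟩, hpw i hi⟩
end
end

section
/- Let r_vel > 0, r_ctr > 0, and let v₀ ∈ ℝ³ with ‖v₀‖ ≤ r_vel. For t > 0, let R_t ⊆ ℝ³ be the set of points reachable within time t by the double integrator started at the origin with initial velocity v₀, i.e. R_t = { x ∈ ℝ³ : there exist a feasible trajectory p for the double integrator with speed bound r_vel and control bound r_ctr with p(0) = 0 and p′(0) = v₀, and a time τ ∈ [0,t], such that p(τ) = x }. Then limsup_{t → 0⁺} (Lebesgue measure of R_t)/t⁵ ≤ (π · r_ctr² · r_vel)/20; equivalently, Volume(R_t) ≤ (π·r_ctr²·r_vel·t⁵)/20 + o(t⁵) as t → 0⁺. -/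
open MeasureTheory Filter

noncomputable section

/-- The set of points reachable within time `t` by a double integrator started at the
origin with initial velocity `v₀`. -/
def ReachSet3 (rvel rctr : ℝ) (v₀ : EuclideanSpace ℝ (Fin 3)) (t : ℝ) :
    Set (EuclideanSpace ℝ (Fin 3)) :=
  {x | ∃ p : ℝ → EuclideanSpace ℝ (Fin 3),
    IsFeasibleTraj 3 rvel rctr p ∧ p 0 = 0 ∧ deriv p 0 = v₀ ∧
    ∃ τ ∈ Set.Icc (0 : ℝ) t, p τ = x}

/-!
By Taylor's formula with a `K`-Lipschitz derivative (`K = max rctr 0`), at time `τ` a feasible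
trajectory lies within `K τ² / 2` of `τ v₀`. Cutting `[0, t]` into `N` equal pieces, the balls of
the `i`-th piece fit in one solid cylinder with axis `ℝ v₀`, length `t ‖v₀‖ / N + K t²` and radius
`K (t (i + 1) / N)² / 2`. Since `∑_{i<N} (i + 1)⁴ ≤ (N + 1)⁵ / 5`, this gives
`vol R_t ≤ π K² / 20 · (1 + 1/N)⁵ (‖v₀‖ + N K t) t⁵`, hence
`limsup vol R_t / t⁵ ≤ π K² ‖v₀‖ / 20 · (1 + 1/N)⁵` for every `N`; let `N → ∞`.
-/

open Set Metric NNReal Topology Real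

theorem norm_sub_sub_smul_deriv_le_of_lipschitzWith {E : Type*} [NormedAddCommGroup E]
    [NormedSpace ℝ E] {f : ℝ → E} {K : ℝ≥0} (hf : Differentiable ℝ f)
    (hf' : LipschitzWith K (deriv f)) {a x : ℝ} (hax : a ≤ x) :
    ‖f x - f a - (x - a) • deriv f a‖ ≤ K * (x - a) ^ 2 / 2 := by
  have hg (u : ℝ) : HasDerivAt (fun u ↦ f u - f a - (u - a) • deriv f a)
      (deriv f u - deriv f a) u :=
    (((hf u).hasDerivAt.sub_const (f a)).sub
      (((hasDerivAt_id u).sub_const a).smul_const (deriv f a))).congr_deriv (by simp)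
  have hB (u : ℝ) : HasDerivAt (fun u ↦ K * (u - a) ^ 2 / 2) (K * (u - a)) u :=
    ((((hasDerivAt_id u).sub_const a).pow 2).const_mul (K : ℝ) |>.div_const 2).congr_deriv
      (by simp; ring)
  refine image_norm_le_of_norm_deriv_right_le_deriv_boundary
    (fun u _ ↦ (hg u).continuousAt.continuousWithinAt) (fun u _ ↦ (hg u).hasDerivWithinAt)
    (by simp) hB (fun u hu ↦ ?_) ⟨hax, le_rfl⟩
  calc ‖deriv f u - deriv f a‖ ≤ K * dist u a := by
        simpa [dist_eq_norm] using hf'.dist_le_mul u a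
    _ = K * (u - a) := by rw [Real.dist_eq, abs_of_nonneg (sub_nonneg.2 hu.1)]

theorem exists_lt_mem_Icc_mul {h τ : ℝ} (hh : 0 < h) {N : ℕ} (hN : 0 < N)
    (hτ : τ ∈ Icc 0 (N * h)) : ∃ i < N, τ ∈ Icc (i * h) ((i + 1) * h) := by
  refine ⟨min ⌊τ / h⌋₊ (N - 1), by omega, ?_, ?_⟩
  · rw [← le_div_iff₀ hh]
    exact (Nat.cast_le.2 (min_le_left _ _)).trans (Nat.floor_le (div_nonneg hτ.1 hh.le))
  · rw [← div_le_iff₀ hh]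
    rcases le_total ⌊τ / h⌋₊ (N - 1) with hle | hle
    · rw [min_eq_left hle]
      exact (Nat.lt_floor_add_one _).le
    · rw [min_eq_right hle, Nat.cast_pred hN, sub_add_cancel, div_le_iff₀ hh]
      exact hτ.2

theorem sum_range_add_one_pow_four_le (N : ℕ) :
    ∑ i ∈ Finset.range N, ((i : ℝ) + 1) ^ 4 ≤ ((N : ℝ) + 1) ^ 5 / 5 := by
  induction N with
  | zero => norm_num
  | succ n ih =>
    rw [Finset.sum_range_succ, Nat.cast_succ]
    have hn : (0 : ℝ) ≤ n + 1 := by positivity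
    nlinarith [pow_nonneg hn 3, pow_nonneg hn 2]

theorem limsup_le_of_eventually_le_of_tendsto {α : Type*} {l : Filter α} [l.NeBot]
    {f g : α → ℝ} {a c : ℝ} (hf : ∀ᶠ x in l, c ≤ f x) (hfg : f ≤ᶠ[l] g)
    (hg : Tendsto g l (𝓝 a)) : limsup f l ≤ a :=
  (limsup_le_limsup hfg (isCoboundedUnder_le_of_eventually_le l hf) hg.isBoundedUnder_le).trans
    hg.limsup_eq.le

theorem exists_orthonormalBasis_eq_norm_smul {ι E : Type*} [Fintype ι] [NormedAddCommGroup E]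
    [InnerProductSpace ℝ E] [FiniteDimensional ℝ E] (hι : Module.finrank ℝ E = Fintype.card ι)
    (i : ι) (v : E) : ∃ B : OrthonormalBasis ι ℝ E, v = ‖v‖ • B i := by
  obtain ⟨u, hu, hvu⟩ : ∃ u : E, ‖u‖ = 1 ∧ v = ‖v‖ • u := by
    by_cases hv : v = 0
    · have : Nontrivial E :=
        Module.nontrivial_of_finrank_pos (R := ℝ) (hι ▸ Fintype.card_pos_iff.2 ⟨i⟩)
      obtain ⟨u, hu⟩ := exists_norm_eq E zero_le_one
      exact ⟨u, hu, by simp [hv]⟩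
    · refine ⟨‖v‖⁻¹ • v, norm_smul_inv_norm hv, ?_⟩
      rw [smul_smul, mul_inv_cancel₀ (norm_ne_zero_iff.2 hv), one_smul]
  obtain ⟨B, hB⟩ := Orthonormal.exists_orthonormalBasis_extension_of_card_eq hι
    (v := fun _ ↦ u) (s := {i}) (orthonormal_subsingleton_iff.2 fun _ ↦ hu)
  exact ⟨B, by rw [hB i rfl, ← hvu]⟩

section SolidCylinder

variable {n : ℕ} (B : OrthonormalBasis (Fin (n + 1)) ℝ (EuclideanSpace ℝ (Fin (n + 1))))

def axialCoords : EuclideanSpace ℝ (Fin (n + 1)) ≃ᵐ ℝ × EuclideanSpace ℝ (Fin n) :=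
  B.measurableEquiv.trans <| (MeasurableEquiv.toLp 2 _).symm.trans <|
    (MeasurableEquiv.piFinSuccAbove (fun _ ↦ ℝ) 0).trans <|
      MeasurableEquiv.prodCongr (MeasurableEquiv.refl ℝ) (MeasurableEquiv.toLp 2 _)

theorem axialCoords_apply (x : EuclideanSpace ℝ (Fin (n + 1))) :
    axialCoords B x = (B.repr x 0, WithLp.toLp 2 fun i ↦ B.repr x i.succ) := rfl

theorem measurePreserving_axialCoords : MeasurePreserving (axialCoords B) :=
  B.measurePreserving_measurableEquiv.trans <|
    (EuclideanSpace.volume_preserving_symm_measurableEquiv_toLp _).trans <|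
      (volume_preserving_piFinSuccAbove (fun _ ↦ ℝ) 0).trans <|
        (MeasurePreserving.id volume).prod (PiLp.volume_preserving_toLp _)

theorem sq_axialCoords_fst_add_norm_sq (x : EuclideanSpace ℝ (Fin (n + 1))) :
    (axialCoords B x).1 ^ 2 + ‖(axialCoords B x).2‖ ^ 2 = ‖x‖ ^ 2 := by
  rw [← B.repr.norm_map, EuclideanSpace.real_norm_sq_eq, EuclideanSpace.real_norm_sq_eq,
    Fin.sum_univ_succ, axialCoords_apply]

theorem axialCoords_sub_smul (x : EuclideanSpace ℝ (Fin (n + 1))) (c : ℝ) :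
    axialCoords B (x - c • B 0) = ((axialCoords B x).1 - c, (axialCoords B x).2) := by
  simp [axialCoords_apply, Fin.succ_ne_zero]

def solidCylinder (I : Set ℝ) (r : ℝ) : Set (EuclideanSpace ℝ (Fin (n + 1))) :=
  axialCoords B ⁻¹' (I ×ˢ closedBall 0 r)

theorem volume_solidCylinder (I : Set ℝ) (r : ℝ) :
    volume (solidCylinder B I r) =
      volume I * volume (closedBall (0 : EuclideanSpace ℝ (Fin n)) r) := by
  rw [solidCylinder, (measurePreserving_axialCoords B).measure_preimage_equiv,
    Measure.volume_eq_prod, Measure.prod_prod]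

theorem closedBall_smul_subset_solidCylinder (c ρ : ℝ) :
    closedBall (c • B 0) ρ ⊆ solidCylinder B (Icc (c - ρ) (c + ρ)) ρ := by
  intro x hx
  rw [mem_closedBall, dist_eq_norm] at hx
  have hpyth := sq_axialCoords_fst_add_norm_sq B (x - c • B 0)
  rw [axialCoords_sub_smul] at hpyth
  dsimp only at hpyth
  have hρ : 0 ≤ ρ := (norm_nonneg _).trans hx
  have hx' : ‖x - c • B 0‖ ^ 2 ≤ ρ ^ 2 := by gcongr
  have h₁ := abs_le_of_sq_le_sq' (a := (axialCoords B x).1 - c) (by nlinarith) hρ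
  have h₂ : ‖(axialCoords B x).2‖ ≤ ρ :=
    (pow_le_pow_iff_left₀ (norm_nonneg _) hρ two_ne_zero).1 (by nlinarith)
  exact ⟨⟨by linarith, by linarith⟩, mem_closedBall_zero_iff.2 h₂⟩

theorem solidCylinder_mono {I J : Set ℝ} {r r' : ℝ} (hIJ : I ⊆ J) (hr : r ≤ r') :
    solidCylinder B I r ⊆ solidCylinder B J r' :=
  preimage_mono (prod_mono hIJ (closedBall_subset_closedBall hr))

theorem biUnion_closedBall_subset_biUnion_solidCylinder {s h t : ℝ} (hs : 0 ≤ s) (hh : 0 < h)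
    (K : ℝ≥0) {N : ℕ} (hN : 0 < N) (hNh : N * h = t) :
    ⋃ τ ∈ Icc 0 t, closedBall (τ • s • B 0) (K * τ ^ 2 / 2) ⊆
      ⋃ i ∈ Finset.range N, solidCylinder B
        (Icc (i * h * s - K * t ^ 2 / 2) ((i + 1) * h * s + K * t ^ 2 / 2))
        (K * ((i + 1) * h) ^ 2 / 2) := by
  subst hNh
  refine iUnion₂_subset fun τ hτ ↦ ?_
  obtain ⟨i, hi, hτi⟩ := exists_lt_mem_Icc_mul hh hN hτ
  have hρ : (K : ℝ) * τ ^ 2 / 2 ≤ K * (N * h) ^ 2 / 2 := by gcongr; exacts [hτ.1, hτ.2]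
  refine subset_trans ?_ (Finset.subset_set_biUnion_of_mem (Finset.mem_range.2 hi))
  rw [smul_smul]
  refine (closedBall_smul_subset_solidCylinder B _ _).trans <|
    solidCylinder_mono B (Icc_subset_Icc ?_ ?_) ?_
  · have : i * h * s ≤ τ * s := by gcongr; exact hτi.1
    linarith
  · have : τ * s ≤ (i + 1) * h * s := by gcongr; exact hτi.2
    linarith
  · gcongr; exacts [hτ.1, hτi.2]

end SolidCylinder

theorem reachSet3_subset_biUnion_closedBall (rvel rctr : ℝ) (v₀ : EuclideanSpace ℝ (Fin 3))
    (t : ℝ) :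
    ReachSet3 rvel rctr v₀ t ⊆ ⋃ τ ∈ Icc 0 t, closedBall (τ • v₀) (rctr.toNNReal * τ ^ 2 / 2) := by
  rintro x ⟨p, ⟨hp, -, hlip⟩, hp0, hpv, τ, hτ, rfl⟩
  refine mem_biUnion hτ ?_
  rw [mem_closedBall, dist_eq_norm]
  simpa [hp0, hpv] using
    norm_sub_sub_smul_deriv_le_of_lipschitzWith (hp.differentiable one_ne_zero) hlip hτ.1

theorem volume_biUnion_closedBall_smul_le (v : EuclideanSpace ℝ (Fin 3)) (K : ℝ≥0) {t : ℝ}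
    (ht : 0 < t) {N : ℕ} (hN : 0 < N) :
    volume (⋃ τ ∈ Icc 0 t, closedBall (τ • v) (K * τ ^ 2 / 2)) ≤
      ENNReal.ofReal (π * K ^ 2 / 20 * (1 + (N : ℝ)⁻¹) ^ 5 * (‖v‖ + N * K * t) * t ^ 5) := by
  obtain ⟨B, hB⟩ := exists_orthonormalBasis_eq_norm_smul (by simp) (0 : Fin 3) v
  have hNpos : (0 : ℝ) < N := Nat.cast_pos.2 hN
  set h := t / N with hh
  have hcover := biUnion_closedBall_subset_biUnion_solidCylinder B (norm_nonneg v)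
    (div_pos ht hNpos) K hN (mul_div_cancel₀ _ hNpos.ne')
  rw [← hB] at hcover
  have hvol (i : ℕ) : volume (solidCylinder B
        (Icc (i * h * ‖v‖ - K * t ^ 2 / 2) ((i + 1) * h * ‖v‖ + K * t ^ 2 / 2))
        (K * ((i + 1) * h) ^ 2 / 2)) =
      ENNReal.ofReal ((h * ‖v‖ + K * t ^ 2) * (π * K ^ 2 * h ^ 4 / 4) * (i + 1) ^ 4) := by
    have hlen : (i + 1) * h * ‖v‖ + K * t ^ 2 / 2 - (i * h * ‖v‖ - K * t ^ 2 / 2) =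
        h * ‖v‖ + K * t ^ 2 := by ring
    rw [volume_solidCylinder, Real.volume_Icc, hlen, EuclideanSpace.volume_closedBall_fin_two,
      ← ENNReal.ofReal_pow (by positivity), ← ENNReal.ofReal_mul (by positivity),
      ← ENNReal.ofReal_mul (by positivity)]
    congr 1
    ring
  refine (measure_mono hcover).trans <| (measure_biUnion_finset_le _ _).trans ?_
  rw [Finset.sum_congr rfl fun i _ ↦ hvol i, ← ENNReal.ofReal_sum_of_nonneg fun i _ ↦ by positivity, ← Finset.mul_sum]
  refine ENNReal.ofReal_le_ofReal ?_
  calc _ ≤ (h * ‖v‖ + K * t ^ 2) * (π * K ^ 2 * h ^ 4 / 4) * (((N : ℝ) + 1) ^ 5 / 5) := by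
        gcongr
        exact sum_range_add_one_pow_four_le N
    _ = _ := by
        rw [hh]
        field_simp
        ring

theorem limsup_volume_reachSet3_div_pow_five_le (rvel rctr : ℝ) (v₀ : EuclideanSpace ℝ (Fin 3))
    {N : ℕ} (hN : 0 < N) :
    limsup (fun t : ℝ ↦ (volume (ReachSet3 rvel rctr v₀ t)).toReal / t ^ 5) (𝓝[>] 0) ≤
      π * rctr.toNNReal ^ 2 / 20 * (1 + (N : ℝ)⁻¹) ^ 5 * ‖v₀‖ := by
  set K := rctr.toNNReal
  have hbound : Tendsto (fun t ↦ π * K ^ 2 / 20 * (1 + (N : ℝ)⁻¹) ^ 5 * (‖v₀‖ + N * K * t))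
      (𝓝[>] 0) (𝓝 (π * K ^ 2 / 20 * (1 + (N : ℝ)⁻¹) ^ 5 * ‖v₀‖)) :=
    (Continuous.tendsto' (by fun_prop) 0 _ (by simp)).mono_left nhdsWithin_le_nhds
  refine limsup_le_of_eventually_le_of_tendsto (c := 0) ?_ ?_ hbound
  · filter_upwards [self_mem_nhdsWithin] with t (ht : 0 < t) using by positivity
  · filter_upwards [self_mem_nhdsWithin] with t (ht : 0 < t)
    rw [div_le_iff₀ (by positivity)]
    exact ENNReal.toReal_le_of_le_ofReal (by positivity) <|
      (measure_mono (reachSet3_subset_biUnion_closedBall rvel rctr v₀ t)).trans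
        (volume_biUnion_closedBall_smul_le v₀ K ht hN)

theorem reachable_volume_bound_general (rvel rctr : ℝ)
    (v₀ : EuclideanSpace ℝ (Fin 3)) (hv₀ : ‖v₀‖ ≤ rvel) :
    Filter.limsup
      (fun t : ℝ => (volume (ReachSet3 rvel rctr v₀ t)).toReal / t ^ 5)
      (nhdsWithin 0 (Set.Ioi 0)) ≤ Real.pi * rctr ^ 2 * rvel / 20 := by
  have hlim : Tendsto (fun N : ℕ ↦ π * rctr.toNNReal ^ 2 / 20 * (1 + (N : ℝ)⁻¹) ^ 5 * ‖v₀‖)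
      atTop (𝓝 (π * rctr.toNNReal ^ 2 / 20 * ‖v₀‖)) := by
    simpa using
      (((tendsto_inv_atTop_nhds_zero_nat (𝕜 := ℝ)).const_add 1).pow 5).const_mul _ |>.mul_const _
  have hK : (rctr.toNNReal : ℝ) ^ 2 ≤ rctr ^ 2 := by
    rw [← sq_abs rctr, Real.coe_toNNReal']
    exact pow_le_pow_left₀ (by positivity) (max_le (le_abs_self rctr) (abs_nonneg rctr)) 2
  calc _ ≤ π * rctr.toNNReal ^ 2 / 20 * ‖v₀‖ :=
        ge_of_tendsto hlim <| eventually_atTop.2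
          ⟨1, fun N hN ↦ limsup_volume_reachSet3_div_pow_five_le rvel rctr v₀ hN⟩
    _ ≤ π * rctr ^ 2 * rvel / 20 := by
        rw [div_mul_eq_mul_div, mul_assoc, mul_assoc]
        gcongr

theorem reachable_volume_bound (rvel rctr : ℝ) (hv : 0 < rvel) (hc : 0 < rctr)
    (v₀ : EuclideanSpace ℝ (Fin 3)) (hv₀ : ‖v₀‖ ≤ rvel) :
    Filter.limsup
      (fun t : ℝ => (volume (ReachSet3 rvel rctr v₀ t)).toReal / t ^ 5)
      (nhdsWithin 0 (Set.Ioi 0)) ≤ Real.pi * rctr ^ 2 * rvel / 20 :=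
  reachable_volume_bound_general rvel rctr v₀ hv₀
end
end

section
/- Let d ≥ 1, ρ > 0, r_ctr > 0, and set s = √(ρ·r_ctr). (i) If γ : ℝ → ℝ^d is a feasible curve for the Dubins vehicle with minimum turning radius ρ (unit speed, derivative (1/ρ)-Lipschitz), then the reparametrized curve t ↦ γ(s·t) is a feasible trajectory for the double integrator with speed bound s and control bound r_ctr, traversed at constant speed s. (ii) Conversely, if p : ℝ → ℝ^d is a feasible trajectory for the double integrator with control bound r_ctr that moves at constant speed s₀ > 0 (i.e. ‖p′(t)‖ = s₀ for all t), then the unit-speed reparametrization t ↦ p(t/s₀) is a feasible curve for the Dubins vehicle with minimum turning radius s₀²/r_ctr. -/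
noncomputable section

/-- A feasible curve for the Dubins vehicle with minimum turning radius `ρ`:
a C¹ unit-speed curve whose derivative is `(1/ρ)`-Lipschitz. -/
def IsDubinsCurve (d : ℕ) (ρ : ℝ) (γ : ℝ → EuclideanSpace ℝ (Fin d)) : Prop :=
  ContDiff ℝ 1 γ ∧ (∀ t : ℝ, ‖deriv γ t‖ = 1) ∧
    LipschitzWith (Real.toNNReal (1 / ρ)) (deriv γ)

/-! The time change `t ↦ c t` multiplies the speed by `|c|` and the Lipschitz constant of the
velocity by `c²`. With `c = √(ρ r_ctr)` a unit speed and curvature bound `1/ρ` become speed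
`√(ρ r_ctr)` and control bound `r_ctr`; with `c = 1/s₀` the converse trade is made. -/

theorem LipschitzWith.deriv_comp_mul_left {𝕜 E : Type*} [NontriviallyNormedField 𝕜]
    [NormedAddCommGroup E] [NormedSpace 𝕜 E] {f : 𝕜 → E} {K : NNReal}
    (hf : LipschitzWith K (deriv f)) (c : 𝕜) :
    LipschitzWith (‖c‖₊ ^ 2 * K) (deriv (f <| c * ·)) := by
  have h_deriv : deriv (f <| c * ·) = (c • ·) ∘ deriv f ∘ (c • ·) :=
    funext fun x => _root_.deriv_comp_mul_left c f x
  rw [h_deriv]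
  exact ((lipschitzWith_smul c).comp (hf.comp (lipschitzWith_smul c))).weaken
    (le_of_eq (by ring))

theorem dubins_double_integrator_equivalence_general (d : ℕ)
    (ρ rctr : ℝ) (hρ : 0 < ρ) (hc : 0 < rctr) :
    -- (i) a Dubins curve, reparametrized to speed `s = √(ρ rctr)`, is a feasible
    -- double-integrator trajectory with speed bound `s`, traversed at constant speed `s`
    (∀ γ : ℝ → EuclideanSpace ℝ (Fin d), IsDubinsCurve d ρ γ →
      IsFeasibleTraj d (Real.sqrt (ρ * rctr)) rctr
        (fun t => γ (Real.sqrt (ρ * rctr) * t)) ∧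
      (∀ t : ℝ, ‖deriv (fun t => γ (Real.sqrt (ρ * rctr) * t)) t‖ =
        Real.sqrt (ρ * rctr))) ∧
    -- (ii) a double-integrator trajectory at constant speed `s₀ ≤ rvel`, reparametrized
    -- to unit speed, is a Dubins curve with minimum turning radius `s₀² / rctr`
    (∀ (s₀ : ℝ) (p : ℝ → EuclideanSpace ℝ (Fin d)), 0 < s₀ →
      ContDiff ℝ 1 p → (∀ t : ℝ, ‖deriv p t‖ = s₀) →
      LipschitzWith (Real.toNNReal rctr) (deriv p) →
      IsDubinsCurve d (s₀ ^ 2 / rctr) (fun t => p (t / s₀))) := by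
  refine ⟨fun γ ⟨hγ, hγ_speed, hγ_lip⟩ => ?_, fun s₀ p hs₀ hp hp_speed hp_lip => ?_⟩
  · set s := √(ρ * rctr)
    have hs_sq : s ^ 2 = ρ * rctr := Real.sq_sqrt (by positivity)
    have h_speed (t : ℝ) : ‖deriv (γ <| s * ·) t‖ = s := by
      rw [deriv_comp_mul_left, norm_smul, hγ_speed, mul_one,
        Real.norm_of_nonneg (Real.sqrt_nonneg _)]
    refine ⟨⟨hγ.comp (contDiff_const.mul contDiff_id), fun t => (h_speed t).le,
      (hγ_lip.deriv_comp_mul_left s).weaken (le_of_eq ?_)⟩, h_speed⟩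
    rw [← NNReal.coe_inj]
    push_cast
    rw [Real.coe_toNNReal _ (by positivity), Real.coe_toNNReal _ hc.le, Real.norm_eq_abs,
      sq_abs, hs_sq]
    field_simp
  · have h_reparam : (fun t => p (t / s₀)) = (p <| s₀⁻¹ * ·) := by
      simp only [div_eq_inv_mul]
    rw [h_reparam]
    refine ⟨hp.comp (contDiff_const.mul contDiff_id), fun t => ?_,
      (hp_lip.deriv_comp_mul_left s₀⁻¹).weaken (le_of_eq ?_)⟩
    · rw [deriv_comp_mul_left, norm_smul, hp_speed, norm_inv, Real.norm_of_nonneg hs₀.le,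
        inv_mul_cancel₀ hs₀.ne']
    · rw [← NNReal.coe_inj]
      push_cast
      rw [Real.coe_toNNReal _ hc.le, Real.coe_toNNReal _ (by positivity), norm_inv,
        Real.norm_of_nonneg hs₀.le]
      field_simp

theorem dubins_double_integrator_equivalence (d : ℕ) (hd : 1 ≤ d)
    (ρ rctr : ℝ) (hρ : 0 < ρ) (hc : 0 < rctr) :
    -- (i) a Dubins curve, reparametrized to speed `s = √(ρ rctr)`, is a feasible
    -- double-integrator trajectory with speed bound `s`, traversed at constant speed `s`
    (∀ γ : ℝ → EuclideanSpace ℝ (Fin d), IsDubinsCurve d ρ γ →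
      IsFeasibleTraj d (Real.sqrt (ρ * rctr)) rctr
        (fun t => γ (Real.sqrt (ρ * rctr) * t)) ∧
      (∀ t : ℝ, ‖deriv (fun t => γ (Real.sqrt (ρ * rctr) * t)) t‖ =
        Real.sqrt (ρ * rctr))) ∧
    -- (ii) a double-integrator trajectory at constant speed `s₀ ≤ rvel`, reparametrized
    -- to unit speed, is a Dubins curve with minimum turning radius `s₀² / rctr`
    (∀ (s₀ : ℝ) (p : ℝ → EuclideanSpace ℝ (Fin d)), 0 < s₀ →
      ContDiff ℝ 1 p → (∀ t : ℝ, ‖deriv p t‖ = s₀) →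
      LipschitzWith (Real.toNNReal rctr) (deriv p) →
      IsDubinsCurve d (s₀ ^ 2 / rctr) (fun t => p (t / s₀))) :=
  dubins_double_integrator_equivalence_general d ρ rctr hρ hc
end
end
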